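/- Let κ₀ ∈ ℝ and κ₁ > 0 with (κ₀ + 1)/κ₁ > 1/4. Then the supremum of the set { τ(θ)^{θ−1} : θ ∈ (1/2, 1) } equals exp(1/2). -/
import Mathlib

/-- `r(θ) = 1 − κ₁(θ − 1/2)(θ − 1)`. -/
noncomputable def rfun (κ₁ θ : ℝ) : ℝ := 1 - κ₁ * (θ - 1/2) * (θ - 1)

/-- `τ(θ) = exp(1 + κ₀ − r(θ)/(2(1 − θ)))`. -/
noncomputable def tau (κ₀ κ₁ θ : ℝ) : ℝ :=
  Real.exp (1 + κ₀ - rfun κ₁ θ / (2 * (1 - θ)))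

/-- The constant `ϱ(κ₀,κ₁)` from formula (5.3) of the paper. -/
noncomputable def varrho (κ₀ κ₁ : ℝ) : ℝ :=
  if (κ₀ + 1) / κ₁ > 1/4 then Real.exp (1/2)
  else if (κ₀ + 1) / κ₁ < -(1/4) then Real.exp (-κ₀ / 2)
  else Real.exp ((16 * κ₀ ^ 2 - 8 * κ₀ * (κ₁ - 4) + (4 + κ₁) ^ 2) / (32 * κ₁))

lemma tau_rpow_eq (κ₀ κ₁ θ : ℝ) (hθ : θ ∈ Set.Ioo (1/2 : ℝ) 1) :
    tau κ₀ κ₁ θ ^ (θ - 1) =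
      Real.exp ((θ - 1) * (1 + κ₀) + rfun κ₁ θ / 2) := by
  rw [tau, ← Real.exp_mul]
  congr 1
  have h : (1 : ℝ) - θ ≠ 0 := by have := hθ.2; intro h; linarith
  field_simp
  ring

/-- First case of formula (5.3): if `(κ₀+1)/κ₁ > 1/4` then
`sup { τ(θ)^{θ−1} : θ ∈ (1/2,1) } = exp(1/2)`. -/
theorem sup_tau_rpow_case_one (κ₀ κ₁ : ℝ) (hκ₁ : 0 < κ₁)
    (hcase : (κ₀ + 1) / κ₁ > 1/4) :
    sSup ((fun θ : ℝ => tau κ₀ κ₁ θ ^ (θ - 1)) '' Set.Ioo (1/2 : ℝ) 1) =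
      Real.exp (1/2) := by
  have hk : κ₁ / 4 < κ₀ + 1 := by
    rw [gt_iff_lt, lt_div_iff₀ hκ₁] at hcase; linarith
  -- upper bound for elements
  have hub : ∀ x ∈ (fun θ : ℝ => tau κ₀ κ₁ θ ^ (θ - 1)) '' Set.Ioo (1/2 : ℝ) 1,
      x ≤ Real.exp (1/2) := by
    rintro x ⟨θ, hθ, rfl⟩
    simp only []
    rw [tau_rpow_eq κ₀ κ₁ θ hθ]
    apply Real.exp_le_exp.2
    obtain ⟨h1, h2⟩ := hθ
    rw [rfun]
    nlinarith [mul_pos (show (0:ℝ) < 1 - θ by linarith)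
      (show (0:ℝ) < (1 + κ₀) - κ₁ * (θ - 1/2) / 2 by nlinarith)]
  have hne : ((fun θ : ℝ => tau κ₀ κ₁ θ ^ (θ - 1)) '' Set.Ioo (1/2 : ℝ) 1).Nonempty :=
    ⟨_, ⟨3/4, by norm_num, rfl⟩⟩
  have hbdd : BddAbove ((fun θ : ℝ => tau κ₀ κ₁ θ ^ (θ - 1)) '' Set.Ioo (1/2 : ℝ) 1) :=
    ⟨Real.exp (1/2), hub⟩
  apply le_antisymm
  · exact Real.sSup_le hub (Real.exp_pos _).le
  · rw [Real.le_sSup_iff hbdd hne]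
    intro ε hε
    -- the function tends to exp(1/2) as θ → 1⁻
    set G : ℝ → ℝ := fun θ => Real.exp ((θ - 1) * (1 + κ₀) + rfun κ₁ θ / 2) with hG
    have hGcont : Continuous G := by
      unfold G; unfold rfun; continuity
    have hG1 : G 1 = Real.exp (1/2) := by
      simp [hG, rfun]
    have htend : Filter.Tendsto G (nhdsWithin 1 (Set.Iio 1)) (nhds (Real.exp (1/2))) := by
      rw [← hG1]
      exact (hGcont.tendsto 1).mono_left nhdsWithin_le_nhds
    have hev : ∀ᶠ θ in nhdsWithin 1 (Set.Iio 1), Real.exp (1/2) + ε < G θ :=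
      htend.eventually (eventually_gt_nhds (by linarith))
    have hmem : Set.Ioo (1/2 : ℝ) 1 ∈ nhdsWithin (1:ℝ) (Set.Iio 1) :=
      Ioo_mem_nhdsLT_of_mem (by constructor <;> norm_num)
    obtain ⟨θ, hθG, hθmem⟩ := (hev.and (Filter.eventually_of_mem hmem (fun _ h => h))).exists
    exact ⟨_, ⟨θ, hθmem, rfl⟩, by simpa [tau_rpow_eq κ₀ κ₁ θ hθmem] using hθG⟩
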